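/- For the Chudnovsky-type series, the point (( (5+4√2)/(7√3) ))^4 satisfies ((5+4√2)/(7√3))^4 = 256 t(((√5-1)/2)^{12}), where t(z) = z/(2(1+14z+z^2)^4) · (1-36z+199z^2+184z^3+199z^4-36z^5+z^6 + (1+z)(1-z)^2(1-18z+z^2)√(1-34z+z^2)). -/
import Mathlib


/-- Yang's algebraic function `t(z)`. -/
noncomputable def tFun (z : ℝ) : ℝ :=
  z / (2 * (1 + 14 * z + z ^ 2) ^ 4) *
    (1 - 36 * z + 199 * z ^ 2 + 184 * z ^ 3 + 199 * z ^ 4 - 36 * z ^ 5 + z ^ 6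
      + (1 + z) * (1 - z) ^ 2 * (1 - 18 * z + z ^ 2) * Real.sqrt (1 - 34 * z + z ^ 2))

theorem sato_point_evaluation :
    ((5 + 4 * Real.sqrt 2) / (7 * Real.sqrt 3)) ^ 4
      = 256 * tFun (((Real.sqrt 5 - 1) / 2) ^ 12) := by
  have h2 : Real.sqrt 2 ^ 2 = 2 := Real.sq_sqrt (by norm_num)
  have h3 : Real.sqrt 3 ^ 2 = 3 := Real.sq_sqrt (by norm_num)
  have h5 : Real.sqrt 5 ^ 2 = 5 := Real.sq_sqrt (by norm_num)
  have n2 : (0:ℝ) ≤ Real.sqrt 2 := Real.sqrt_nonneg 2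
  have n5 : (0:ℝ) ≤ Real.sqrt 5 := Real.sqrt_nonneg 5
  have hz : ((Real.sqrt 5 - 1) / 2) ^ 12 = 161 - 72 * Real.sqrt 5 := by
    linear_combination ((131891/4096:ℝ) + (-14745/1024:ℝ) * Real.sqrt 5 + (26365/4096:ℝ) * Real.sqrt 5 ^ 2 + (-1469/512:ℝ) * Real.sqrt 5 ^ 3 + (2587/2048:ℝ) * Real.sqrt 5 ^ 4 + (-137/256:ℝ) * Real.sqrt 5 ^ 5 + (425/2048:ℝ) * Real.sqrt 5 ^ 6 + (-35/512:ℝ) * Real.sqrt 5 ^ 7 + (71/4096:ℝ) * Real.sqrt 5 ^ 8 + (-3/1024:ℝ) * Real.sqrt 5 ^ 9 + (1/4096:ℝ) * Real.sqrt 5 ^ 10) * h5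
  have hnn : (0:ℝ) ≤ Real.sqrt 2 * (108 - 48 * Real.sqrt 5) := by
    apply mul_nonneg n2
    nlinarith [h5, n5]
  have hsq : Real.sqrt (1 - 34 * (161 - 72 * Real.sqrt 5) + (161 - 72 * Real.sqrt 5) ^ 2)
      = Real.sqrt 2 * (108 - 48 * Real.sqrt 5) := by
    rw [show (1 - 34 * (161 - 72 * Real.sqrt 5) + (161 - 72 * Real.sqrt 5) ^ 2 : ℝ)
        = (Real.sqrt 2 * (108 - 48 * Real.sqrt 5)) ^ 2 from by
      linear_combination ((-11664:ℝ) + (10368:ℝ) * Real.sqrt 5 + (-2304:ℝ) * Real.sqrt 5 ^ 2) * h2 + (576:ℝ) * h5]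
    exact Real.sqrt_sq hnn
  have hEpos : (0:ℝ) < 2 * (1 + 14 * (161 - 72 * Real.sqrt 5) + (161 - 72 * Real.sqrt 5) ^ 2) ^ 4 := by
    have h1 : (1 + 14 * (161 - 72 * Real.sqrt 5) + (161 - 72 * Real.sqrt 5) ^ 2 : ℝ)
        = 54096 - 24192 * Real.sqrt 5 := by linear_combination (5184:ℝ) * h5
    rw [h1]
    have : (0:ℝ) < 54096 - 24192 * Real.sqrt 5 := by nlinarith [h5, n5]
    positivity
  have hE : (2 * (1 + 14 * (161 - 72 * Real.sqrt 5) + (161 - 72 * Real.sqrt 5) ^ 2) ^ 4 : ℝ) ≠ 0 :=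
    ne_of_gt hEpos
  have hA : ((5 + 4 * Real.sqrt 2) / (7 * Real.sqrt 3)) ^ 4
      = (6449 + 4560 * Real.sqrt 2) / 21609 := by
    have h7 : ((7 * Real.sqrt 3) ^ 4 : ℝ) ≠ 0 := by
      have : (0:ℝ) < Real.sqrt 3 := Real.sqrt_pos.mpr (by norm_num)
      positivity
    rw [div_pow, div_eq_div_iff h7 (by norm_num : (21609:ℝ) ≠ 0)]
    linear_combination ((62925408:ℝ) + (27659520:ℝ) * Real.sqrt 2 + (5531904:ℝ) * Real.sqrt 2 ^ 2) * h2 + ((-46452147:ℝ) + (-15484049:ℝ) * Real.sqrt 3 ^ 2 + (-32845680:ℝ) * Real.sqrt 2 + (-10948560:ℝ) * Real.sqrt 2 * Real.sqrt 3 ^ 2) * h3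
  unfold tFun
  rw [hz, hsq, hA, div_mul_eq_mul_div, ← mul_div_assoc,
    div_eq_div_iff (by norm_num : (21609:ℝ) ≠ 0) hE]
  linear_combination ((806773891342657388544:ℝ) + (-2320075623323186233344:ℝ) * Real.sqrt 5 + (2769611476806251053056:ℝ) * Real.sqrt 5 ^ 2 + (-1757478184228428447744:ℝ) * Real.sqrt 5 ^ 3 + (625445045010582994944:ℝ) * Real.sqrt 5 ^ 4 + (-118391405534515298304:ℝ) * Real.sqrt 5 ^ 5 + (9314988950110076928:ℝ) * Real.sqrt 5 ^ 6 + (687331139567795306496:ℝ) * Real.sqrt 2 + (-1905650380484741431296:ℝ) * Real.sqrt 2 * Real.sqrt 5 + (2198928030879411339264:ℝ) * Real.sqrt 2 * Real.sqrt 5 ^ 2 + (-1351798068732437200896:ℝ) * Real.sqrt 2 * Real.sqrt 5 ^ 3 + (466980618319800827904:ℝ) * Real.sqrt 2 * Real.sqrt 5 ^ 4 + (-85955773364617347072:ℝ) * Real.sqrt 2 * Real.sqrt 5 ^ 5 + (6586501723135672320:ℝ) * Real.sqrt 2 * Real.sqrt 5 ^ 6) * h5
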